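/- arXiv:1407.1543 — 3 statements merged into one kernel-verified Lean document; each statement's English description precedes it below -/
import Mathlib

section
/- Let w_1, …, w_n be polynomials with real coefficients, each of which is a sum of squares, and let α = (α_1, …, α_n) be a multiindex with |α| = α_1 + … + α_n = s ≥ 1. Then the polynomial Σ_{i=1}^n w_i^s − w_1^{α_1}·w_2^{α_2}⋯w_n^{α_n} is a sum of squares. -/
open MvPolynomial

/-- A polynomial is a sum of squares if it is a finite sum of squares of polynomials. -/
def IsSOS {σ : Type*} (p : MvPolynomial σ ℝ) : Prop :=
  ∃ (r : ℕ) (q : Fin r → MvPolynomial σ ℝ), p = ∑ i, q i ^ 2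

/-!
Hurwitz's proof of the AM-GM inequality, carried out in the cone of sums of squares.
For sums of squares `a, b` the two-variable inequality `(m+1) aᵐ b ⪯ m aᵐ⁺¹ + bᵐ⁺¹` follows by
induction on `m`, each step adding `(a - b)² ∑ aⁱ bᵐ⁻ⁱ`. Summing it over the entries `x` of a
multiset `M` of size `m` and adding `(m+1) a` times the inequality `m ∏ M ⪯ ∑ xᵐ` gives `m` times
the inequality for `a ::ₘ M`. Taking `M` to contain `wᵢ` with multiplicity `αᵢ` yields
`s ∏ wᵢ^αᵢ ⪯ ∑ αᵢ wᵢˢ`, and `s ∑ wᵢˢ - ∑ αᵢ wᵢˢ = ∑ (s - αᵢ) wᵢˢ`. The factors `m` and `s` can be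
divided out because `m⁻¹ = m (m⁻¹)²` is itself a sum of squares.
-/

section SumsOfSquares

variable {R : Type*}

theorem IsSumSq.pow [CommSemiring R] {a : R} (ha : IsSumSq a) (n : ℕ) : IsSumSq (a ^ n) := by
  simpa using pow_mem (S := Subsemiring.sumSq R) (by simpa) n

theorem IsSumSq.multiset_sum [AddCommMonoid R] [Mul R] {M : Multiset R}
    (h : ∀ x ∈ M, IsSumSq x) : IsSumSq M.sum :=
  Multiset.sum_induction _ _ (fun _ _ => IsSumSq.add) IsSumSq.zero h

theorem IsSumSq.of_natCast_mul [CommSemiring R] {m : ℕ} {x : R} (hm : IsUnit (m : R))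
    (h : IsSumSq (m * x)) : IsSumSq x := by
  obtain ⟨u, hu⟩ := hm
  have hx : x = m * (↑u⁻¹ * ↑u⁻¹) * (m * x) := by
    rw [← hu]
    simp only [Units.mul_inv_cancel_left, Units.inv_mul_cancel_left]
  rw [hx]
  exact ((IsSumSq.natCast m).mul (.mul_self _)).mul h

theorem isUnit_natCast_of_algebra_rat [Ring R] [Algebra ℚ R] {m : ℕ} (hm : m ≠ 0) :
    IsUnit (m : R) := by
  simpa using (Nat.cast_ne_zero.2 hm : (m : ℚ) ≠ 0).isUnit.map (algebraMap ℚ R)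

end SumsOfSquares

section AMGM

variable {R : Type*} [CommRing R]

theorem isSumSq_amgm_two {a b : R} (ha : IsSumSq a) (hb : IsSumSq b) (m : ℕ) :
    IsSumSq (m * a ^ (m + 1) + b ^ (m + 1) - (m + 1) * a ^ m * b) := by
  induction m with
  | zero => simp
  | succ k ih =>
    set G := ∑ i ∈ Finset.range (k + 1), a ^ i * b ^ (k + 1 - 1 - i)
    have hgeom : G * (a - b) = a ^ (k + 1) - b ^ (k + 1) := geom_sum₂_mul a b (k + 1)
    have key : ((k + 1 : ℕ) : R) * a ^ (k + 1 + 1) + b ^ (k + 1 + 1)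
        - ((k + 1 : ℕ) + 1) * a ^ (k + 1) * b
        = a * (k * a ^ (k + 1) + b ^ (k + 1) - (k + 1) * a ^ k * b)
          + (a - b) * (a - b) * G := by
      push_cast
      linear_combination (b - a) * hgeom
    rw [key]
    exact (ha.mul ih).add <| (IsSumSq.mul_self _).mul <|
      IsSumSq.sum fun i _ => (ha.pow i).mul (hb.pow _)

theorem isSumSq_amgm_multiset [Algebra ℚ R] (M : Multiset R) (hM : ∀ x ∈ M, IsSumSq x) :
    IsSumSq ((M.map (· ^ Multiset.card M)).sum - Multiset.card M * M.prod) := by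
  induction M using Multiset.induction_on with
  | empty => simp
  | cons a M ih =>
    have ha := hM a (Multiset.mem_cons_self a M)
    have hM' : ∀ x ∈ M, IsSumSq x := fun x hx => hM x (Multiset.mem_cons_of_mem hx)
    set m := Multiset.card M with hm
    rcases Nat.eq_zero_or_pos m with h0 | hpos
    · rw [h0, eq_comm, Multiset.card_eq_zero] at hm
      simp [hm]
    refine IsSumSq.of_natCast_mul (m := m) (isUnit_natCast_of_algebra_rat hpos.ne') ?_
    have key : (m : R) * (((a ::ₘ M).map (· ^ Multiset.card (a ::ₘ M))).sum
          - Multiset.card (a ::ₘ M) * (a ::ₘ M).prod)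
        = (M.map fun x => m * x ^ (m + 1) + a ^ (m + 1) - (m + 1) * x ^ m * a).sum
          + ((m + 1 : ℕ) : R) * a * ((M.map (· ^ m)).sum - m * M.prod) := by
      simp only [Multiset.card_cons, Multiset.map_cons, Multiset.sum_cons, Multiset.prod_cons,
        Multiset.sum_map_sub, Multiset.sum_map_add, Multiset.sum_map_mul_left,
        Multiset.sum_map_mul_right, Multiset.map_const', Multiset.sum_replicate, nsmul_eq_mul, ← hm]
      push_cast
      ring
    rw [key]
    exact (IsSumSq.multiset_sum (by simpa using fun x hx => isSumSq_amgm_two (hM' x hx) ha m)).add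
      (((IsSumSq.natCast (m + 1)).mul ha).mul (by simpa using ih hM'))

theorem isSumSq_amgm_weighted [Algebra ℚ R] {ι : Type*} [Fintype ι] (w : ι → R)
    (hw : ∀ i, IsSumSq (w i)) (α : ι → ℕ) :
    IsSumSq (∑ i, (α i : R) * w i ^ (∑ j, α j) - (∑ j, α j : ℕ) * ∏ i, w i ^ α i) := by
  let M : Multiset R := Finset.univ.val.bind fun i => Multiset.replicate (α i) (w i)
  have hcard : Multiset.card M = ∑ j, α j := by simp [M, Multiset.card_bind]
  have hsum : (M.map (· ^ Multiset.card M)).sum = ∑ i, (α i : R) * w i ^ (∑ j, α j) := by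
    simp [M, hcard, Multiset.map_bind, Multiset.sum_bind]
  have hprod : M.prod = ∏ i, w i ^ α i := by
    simp [M, Multiset.prod_bind]
  have hM : ∀ x ∈ M, IsSumSq x := by
    simp only [M, Multiset.mem_bind, Multiset.mem_replicate]
    rintro x ⟨i, -, -, rfl⟩
    exact hw i
  have h := isSumSq_amgm_multiset M hM
  rwa [hsum, hprod, hcard] at h

theorem isSumSq_sum_pow_sub_prod_pow [Algebra ℚ R] {ι : Type*} [Fintype ι] (w : ι → R)
    (hw : ∀ i, IsSumSq (w i)) (α : ι → ℕ) (s : ℕ) (hs : 1 ≤ s) (hα : ∑ i, α i = s) :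
    IsSumSq (∑ i, w i ^ s - ∏ i, w i ^ α i) := by
  have hle : ∀ i, α i ≤ s := fun i => hα ▸ Finset.single_le_sum (by simp) (Finset.mem_univ i)
  refine IsSumSq.of_natCast_mul (m := s) (isUnit_natCast_of_algebra_rat (by omega)) ?_
  have key : (s : R) * (∑ i, w i ^ s - ∏ i, w i ^ α i)
      = ∑ i, ((s - α i : ℕ) : R) * w i ^ s
        + (∑ i, (α i : R) * w i ^ (∑ j, α j) - (∑ j, α j : ℕ) * ∏ i, w i ^ α i) := by
    simp only [hα, Nat.cast_sub (hle _), sub_mul, Finset.sum_sub_distrib, mul_sub, Finset.mul_sum]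
    ring
  rw [key]
  exact (IsSumSq.sum fun i _ => (IsSumSq.natCast _).mul ((hw i).pow s)).add
    (isSumSq_amgm_weighted w hw α)

end AMGM

theorem isSOS_iff_isSumSq {σ : Type*} {p : MvPolynomial σ ℝ} : IsSOS p ↔ IsSumSq p := by
  refine ⟨fun ⟨r, q, hq⟩ => hq ▸ IsSumSq.sum_sq _ q, fun h => ?_⟩
  induction h with
  | zero => exact ⟨0, Fin.elim0, by simp⟩
  | sq_add a _ ih =>
    obtain ⟨r, q, rfl⟩ := ih
    exact ⟨r + 1, Fin.cons a q, by simp [Fin.sum_univ_succ, sq]⟩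

/-- If `w 1, …, w n` are sums of squares and `α` is a multiindex of total degree `s ≥ 1`,
then `∑ i, w i ^ s - w ^ α` is a sum of squares. -/
theorem stmt1 {σ : Type*} (n : ℕ) (w : Fin n → MvPolynomial σ ℝ)
    (hw : ∀ i, IsSOS (w i)) (α : Fin n → ℕ) (s : ℕ) (hs : 1 ≤ s)
    (hα : ∑ i, α i = s) :
    IsSOS ((∑ i, w i ^ s) - ∏ i, w i ^ α i) :=
  isSOS_iff_isSumSq.2 <|
    isSumSq_sum_pow_sub_prod_pow w (fun i => isSOS_iff_isSumSq.1 (hw i)) α s hs hα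
end

section
/- Let c ∈ ℝⁿ be a unit vector, let k ≥ 2 be even, let ε > 0 and M ≥ 1, and let L be a degree-(k+2) pseudoexpectation on ℝ[u₁,…,u_n] that satisfies the constraint {‖u‖₂² = 1} and such that L(⟨c,u⟩^k) ≥ e^{−εk}. Define the polynomial W̄ = (⟨c,u⟩² + (1/M)·‖u‖₂²)^{k/2} ∈ ℝ[u₁,…,u_n]. Then: (i) W̄ is a sum of squares of degree k; (ii) L(W̄) ≥ e^{−εk}; and (iii) L(W̄·⟨c,u⟩²) ≥ (1 − 2/M)·L(W̄) − (1 − 1/M)^{k/2}. -/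
open MvPolynomial

/-- A degree-`k` pseudoexpectation on `ℝ[u₁,…,u_n]`: a linear functional with `L 1 = 1`
and `L (P²) ≥ 0` whenever `deg (P²) ≤ k`. -/
def IsPseudoExpectation (n k : ℕ) (L : MvPolynomial (Fin n) ℝ → ℝ) : Prop :=
  (∀ P Q : MvPolynomial (Fin n) ℝ, L (P + Q) = L P + L Q) ∧
  (∀ (c : ℝ) (P : MvPolynomial (Fin n) ℝ), L (c • P) = c * L P) ∧
  L 1 = 1 ∧
  ∀ P : MvPolynomial (Fin n) ℝ, (P ^ 2).totalDegree ≤ k → 0 ≤ L (P ^ 2)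

def SatisfiesZero (n k : ℕ) (L : MvPolynomial (Fin n) ℝ → ℝ)
    (P : MvPolynomial (Fin n) ℝ) : Prop :=
  ∀ Q : MvPolynomial (Fin n) ℝ, (P * Q).totalDegree ≤ k → L (P * Q) = 0

/-!
Write `k = 2m` and `W̄ = p ^ m` with `p = ⟨c,u⟩² + ‖u‖₂²/M`. Since `p` is a sum of squares of
linear forms, homogeneous of degree 2 and positive at `c`, `W̄` is a sum of squares of exact
degree `k`. Expanding `(⟨c,u⟩² + ‖u‖₂²/M)^m` binomially exhibits `W̄ - ⟨c,u⟩^k` as a sum of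
squares of degree `k`, which gives `L W̄ ≥ L ⟨c,u⟩^k`.

For the last inequality put `a = 1 - 1/M`. The univariate inequality
`t^(m+1) - a t^m + a^m ≥ 0` (`t ≥ 0`) has the certificate
`(t - a)² ∑_{i<m} t^i a^(m-1-i) + a^m t + a^m (1 - a)`; substituting `t = p`, it is a sum of
squares of degree `k + 2`, so `L(p^(m+1)) ≥ a L W̄ - a^m`. Finally
`L(p^(m+1)) = L(W̄ ⟨c,u⟩²) + L(W̄ ‖u‖₂²)/M = L(W̄ ⟨c,u⟩²) + L(W̄)/M` by the constraint.
-/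

/-- The bound `d` is on the polynomials being squared, so `P` has degree at most `2 * d`. -/
def IsSOSOfDegLe {σ : Type*} (d : ℕ) (P : MvPolynomial σ ℝ) : Prop :=
  ∃ (ι : Type) (_ : Fintype ι) (q : ι → MvPolynomial σ ℝ),
    (∀ i, (q i).totalDegree ≤ d) ∧ P = ∑ i, q i ^ 2

section SOS

variable {σ : Type*} {d e : ℕ} {P Q : MvPolynomial σ ℝ}

lemma isSOSOfDegLe_sq {q : MvPolynomial σ ℝ} (hq : q.totalDegree ≤ d) :
    IsSOSOfDegLe d (q ^ 2) :=
  ⟨Unit, inferInstance, fun _ => q, fun _ => hq, by simp⟩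

lemma isSOSOfDegLe_zero : IsSOSOfDegLe d (0 : MvPolynomial σ ℝ) :=
  ⟨Empty, inferInstance, Empty.elim, Empty.rec, by simp⟩

lemma isSOSOfDegLe_C {a : ℝ} (ha : 0 ≤ a) : IsSOSOfDegLe d (C a : MvPolynomial σ ℝ) :=
  ⟨Unit, inferInstance, fun _ => C √a, fun _ => by simp, by simp [← map_pow, Real.sq_sqrt ha]⟩

namespace IsSOSOfDegLe

lemma isSOS (h : IsSOSOfDegLe d P) : IsSOS P := by
  obtain ⟨ι, _, q, -, rfl⟩ := h
  exact ⟨Fintype.card ι, q ∘ (Fintype.equivFin ι).symm,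
    (Equiv.sum_comp (Fintype.equivFin ι).symm (fun i => q i ^ 2)).symm⟩

lemma totalDegree_le (h : IsSOSOfDegLe d P) : P.totalDegree ≤ 2 * d := by
  obtain ⟨ι, _, q, hq, rfl⟩ := h
  refine (totalDegree_finsetSum _ _).trans (Finset.sup_le fun i _ => ?_)
  exact (totalDegree_pow _ _).trans (by have := hq i; omega)

lemma mono (hde : d ≤ e) (h : IsSOSOfDegLe d P) : IsSOSOfDegLe e P := by
  obtain ⟨ι, _, q, hq, rfl⟩ := h
  exact ⟨ι, ‹_›, q, fun i => (hq i).trans hde, rfl⟩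

lemma add (hP : IsSOSOfDegLe d P) (hQ : IsSOSOfDegLe d Q) : IsSOSOfDegLe d (P + Q) := by
  obtain ⟨ι, _, q, hq, rfl⟩ := hP
  obtain ⟨κ, _, r, hr, rfl⟩ := hQ
  refine ⟨ι ⊕ κ, inferInstance, Sum.elim q r, Sum.forall.2 ⟨hq, hr⟩, ?_⟩
  rw [Fintype.sum_sum_type]
  rfl

lemma mul (hP : IsSOSOfDegLe d P) (hQ : IsSOSOfDegLe e Q) : IsSOSOfDegLe (d + e) (P * Q) := by
  obtain ⟨ι, _, q, hq, rfl⟩ := hP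
  obtain ⟨κ, _, r, hr, rfl⟩ := hQ
  refine ⟨ι × κ, inferInstance, fun x => q x.1 * r x.2,
    fun x => (totalDegree_mul _ _).trans (add_le_add (hq x.1) (hr x.2)), ?_⟩
  simp only [Finset.sum_mul_sum, ← Finset.sum_product', Finset.univ_product_univ, mul_pow]

lemma C_mul {a : ℝ} (ha : 0 ≤ a) (h : IsSOSOfDegLe d P) : IsSOSOfDegLe d (C a * P) := by
  simpa using (isSOSOfDegLe_C (d := 0) ha).mul h

lemma pow (h : IsSOSOfDegLe d P) (m : ℕ) : IsSOSOfDegLe (m * d) (P ^ m) := by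
  induction m with
  | zero => simpa using isSOSOfDegLe_C (σ := σ) (d := 0) zero_le_one
  | succ m ih => simpa [pow_succ, Nat.succ_mul] using ih.mul h

lemma sum {ι : Type*} (s : Finset ι) {f : ι → MvPolynomial σ ℝ}
    (h : ∀ i ∈ s, IsSOSOfDegLe d (f i)) : IsSOSOfDegLe d (∑ i ∈ s, f i) := by
  classical
  induction s using Finset.induction with
  | empty => simpa using isSOSOfDegLe_zero
  | insert i s hi ih =>
    rw [Finset.sum_insert hi]
    exact (h i (s.mem_insert_self i)).add (ih fun j hj => h j (Finset.mem_insert_of_mem hj))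

lemma add_pow_sub_pow (hP : IsSOSOfDegLe d P) (hQ : IsSOSOfDegLe d Q) (m : ℕ) :
    IsSOSOfDegLe (m * d) ((P + Q) ^ m - P ^ m) := by
  rw [add_pow, Finset.sum_range_succ, Nat.sub_self, Nat.choose_self]
  simp only [pow_zero, mul_one, Nat.cast_one, add_sub_cancel_right]
  refine sum _ fun i hi => ?_
  have hi : i < m := Finset.mem_range.mp hi
  rw [← map_natCast C]
  have hchoose := isSOSOfDegLe_C (σ := σ) (d := 0) (Nat.cast_nonneg (m.choose i))
  refine (((hP.pow i).mul (hQ.pow (m - i))).mul hchoose).mono ?_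
  rw [← add_mul, Nat.add_sub_cancel' hi.le, add_zero]

end IsSOSOfDegLe

lemma pow_succ_sub_mul_pow_add_pow {R : Type*} [CommRing R] (p a : R) (m : ℕ) :
    p ^ (m + 1) - a * p ^ m + a ^ m =
      ∑ i ∈ Finset.range m, (p - a) ^ 2 * p ^ i * a ^ (m - 1 - i) +
        a ^ m * p + a ^ m * (1 - a) := by
  have hgeom := geom_sum₂_mul p a m
  simp only [mul_assoc, ← Finset.mul_sum]
  linear_combination (a - p) * hgeom

lemma IsSOSOfDegLe.pow_succ_sub_C_mul_pow_add_C {σ : Type*} {d : ℕ} {P : MvPolynomial σ ℝ}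
    (hP : IsSOSOfDegLe d P) {a : ℝ} (ha₀ : 0 ≤ a) (ha₁ : a ≤ 1) (m : ℕ) :
    IsSOSOfDegLe ((m + 1) * d) (P ^ (m + 1) - C a * P ^ m + C (a ^ m)) := by
  have hconst : C a ^ m * (1 - C a) = (C (a ^ m * (1 - a)) : MvPolynomial σ ℝ) := by simp
  rw [map_pow, pow_succ_sub_mul_pow_add_pow, hconst, ← map_pow]
  refine (IsSOSOfDegLe.sum _ fun i hi => ?_).add ((hP.C_mul (pow_nonneg ha₀ m)).mono ?_)
    |>.add (isSOSOfDegLe_C (mul_nonneg (pow_nonneg ha₀ m) (by linarith)))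
  · have hi : i + 2 ≤ m + 1 := by have := Finset.mem_range.mp hi; omega
    have hsq := isSOSOfDegLe_sq ((totalDegree_sub_C_le P a).trans hP.totalDegree_le)
    rw [← map_pow]
    refine ((hsq.mul (hP.pow i)).mul (isSOSOfDegLe_C (d := 0) (pow_nonneg ha₀ _))).mono ?_
    nlinarith
  · nlinarith

end SOS

namespace IsPseudoExpectation

variable {n k d : ℕ} {L : MvPolynomial (Fin n) ℝ → ℝ}

def toLinearMap (hL : IsPseudoExpectation n k L) : MvPolynomial (Fin n) ℝ →ₗ[ℝ] ℝ where
  toFun := L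
  map_add' := hL.1
  map_smul' := hL.2.1

lemma map_sub (hL : IsPseudoExpectation n k L) (P Q : MvPolynomial (Fin n) ℝ) :
    L (P - Q) = L P - L Q :=
  _root_.map_sub hL.toLinearMap P Q

lemma map_sum (hL : IsPseudoExpectation n k L) {ι : Type*} (s : Finset ι)
    (f : ι → MvPolynomial (Fin n) ℝ) : L (∑ i ∈ s, f i) = ∑ i ∈ s, L (f i) :=
  _root_.map_sum hL.toLinearMap f s

lemma map_C_mul (hL : IsPseudoExpectation n k L) (a : ℝ) (P : MvPolynomial (Fin n) ℝ) :
    L (C a * P) = a * L P := by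
  rw [← smul_eq_C_mul]
  exact hL.2.1 a P

lemma map_C (hL : IsPseudoExpectation n k L) (a : ℝ) : L (C a) = a := by
  simpa [hL.2.2.1] using hL.map_C_mul a 1

lemma nonneg_of_isSOSOfDegLe (hL : IsPseudoExpectation n k L) (hd : 2 * d ≤ k)
    {P : MvPolynomial (Fin n) ℝ} (h : IsSOSOfDegLe d P) : 0 ≤ L P := by
  obtain ⟨ι, _, q, hq, rfl⟩ := h
  rw [hL.map_sum]
  refine Finset.sum_nonneg fun i _ => hL.2.2.2 _ ((totalDegree_pow _ _).trans ?_)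
  have := hq i
  omega

lemma le_of_isSOSOfDegLe_sub (hL : IsPseudoExpectation n k L) (hd : 2 * d ≤ k)
    {P Q : MvPolynomial (Fin n) ℝ} (h : IsSOSOfDegLe d (P - Q)) : L Q ≤ L P := by
  have := hL.nonneg_of_isSOSOfDegLe hd h
  rw [hL.map_sub] at this
  linarith

lemma map_mul_eq_of_satisfiesZero_sub_one (hL : IsPseudoExpectation n k L)
    {S W : MvPolynomial (Fin n) ℝ} (hS : SatisfiesZero n k L (S - 1))
    (hdeg : W.totalDegree + S.totalDegree ≤ k) : L (W * S) = L W := by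
  have hS1 : (S - 1).totalDegree ≤ S.totalDegree := by
    simpa using totalDegree_sub_C_le S 1
  have := hS W ((totalDegree_mul _ _).trans (by omega))
  rw [sub_mul, one_mul, hL.map_sub, mul_comm] at this
  linarith

lemma mul_map_pow_sub_pow_le_map_pow_succ (hL : IsPseudoExpectation n k L) {m : ℕ}
    (hk : 2 * ((m + 1) * d) ≤ k) {P : MvPolynomial (Fin n) ℝ} (hP : IsSOSOfDegLe d P)
    {a : ℝ} (ha₀ : 0 ≤ a) (ha₁ : a ≤ 1) : a * L (P ^ m) - a ^ m ≤ L (P ^ (m + 1)) := by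
  have := hL.nonneg_of_isSOSOfDegLe hk (hP.pow_succ_sub_C_mul_pow_add_C ha₀ ha₁ m)
  rw [hL.1, hL.map_sub, hL.map_C_mul, hL.map_C] at this
  linarith

lemma map_pow_le_map_add_C_mul_pow (hL : IsPseudoExpectation n k L) {m : ℕ} (hk : 2 * m ≤ k)
    {v S : MvPolynomial (Fin n) ℝ} (hv : v.totalDegree ≤ 1) (hS : IsSOSOfDegLe 1 S)
    {b : ℝ} (hb : 0 ≤ b) : L (v ^ (2 * m)) ≤ L ((v ^ 2 + C b * S) ^ m) := by
  rw [pow_mul]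
  refine hL.le_of_isSOSOfDegLe_sub (d := m) hk ?_
  simpa using (isSOSOfDegLe_sq hv).add_pow_sub_pow (hS.C_mul hb) m

lemma sub_le_map_mul_sq (hL : IsPseudoExpectation n k L) {m : ℕ} (hk : 2 * (m + 1) ≤ k)
    {v S : MvPolynomial (Fin n) ℝ} (hv : v.totalDegree ≤ 1) (hS : IsSOSOfDegLe 1 S)
    (hSL : SatisfiesZero n k L (S - 1)) {M : ℝ} (hM : 1 ≤ M) :
    (1 - 2 / M) * L ((v ^ 2 + C (1 / M) * S) ^ m) - (1 - 1 / M) ^ m ≤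
      L ((v ^ 2 + C (1 / M) * S) ^ m * v ^ 2) := by
  set P := v ^ 2 + C (1 / M) * S with hP_def
  have hM₀ : 0 ≤ 1 / M := div_nonneg zero_le_one (by linarith)
  have hM₁ : 1 / M ≤ 1 := (div_le_one (by linarith)).2 hM
  have hP : IsSOSOfDegLe 1 P := (isSOSOfDegLe_sq hv).add (hS.C_mul hM₀)
  have hstep := hL.mul_map_pow_sub_pow_le_map_pow_succ (by simpa using hk) hP
    (a := 1 - 1 / M) (by linarith) (by linarith)
  have hsplit : L (P ^ (m + 1)) = L (P ^ m * v ^ 2) + 1 / M * L (P ^ m * S) := by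
    rw [← hL.map_C_mul, ← hL.1, hP_def]
    ring_nf
  have hconstr : L (P ^ m * S) = L (P ^ m) := by
    have := (hP.pow m).totalDegree_le
    have := hS.totalDegree_le
    exact hL.map_mul_eq_of_satisfiesZero_sub_one hSL (by omega)
  rw [hsplit, hconstr] at hstep
  linear_combination hstep

end IsPseudoExpectation

section

variable {σ : Type*} [Fintype σ]

lemma isHomogeneous_sum_C_mul_X (c : σ → ℝ) :
    (∑ j, C (c j) * X j : MvPolynomial σ ℝ).IsHomogeneous 1 :=
  IsHomogeneous.sum _ _ _ fun j _ => isHomogeneous_C_mul_X (c j) j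

lemma isSOSOfDegLe_sum_X_sq : IsSOSOfDegLe 1 (∑ j, X j ^ 2 : MvPolynomial σ ℝ) :=
  IsSOSOfDegLe.sum _ fun j _ => isSOSOfDegLe_sq (totalDegree_X j).le

lemma totalDegree_sq_add_C_mul_sum_X_sq_pow {c : σ → ℝ} (hc : c ≠ 0) {b : ℝ} (hb : 0 ≤ b)
    (m : ℕ) : (((∑ j, C (c j) * X j) ^ 2 + C b * ∑ j, X j ^ 2) ^ m).totalDegree = 2 * m := by
  have hhom : ((∑ j, C (c j) * X j) ^ 2 + C b * ∑ j, X j ^ 2).IsHomogeneous 2 :=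
    ((isHomogeneous_sum_C_mul_X c).pow 2).add
      ((IsHomogeneous.sum _ _ _ fun j _ => isHomogeneous_X_pow j 2).C_mul b)
  obtain ⟨j, hj⟩ := Function.ne_iff.mp hc
  have hs : 0 < ∑ j, c j ^ 2 :=
    Finset.sum_pos' (fun i _ => sq_nonneg _) ⟨j, Finset.mem_univ _, pow_two_pos_of_ne_zero hj⟩
  refine (hhom.pow m).totalDegree fun h => ?_
  have := congrArg (eval c) h
  simp only [map_pow, map_add, map_mul, map_sum, eval_C, eval_X, map_zero, ← sq] at this
  exact pow_ne_zero m (add_pos_of_pos_of_nonneg (pow_pos hs 2) (mul_nonneg hb hs.le)).ne' this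

end

theorem stmt12_general (n : ℕ) (c : Fin n → ℝ) (hc : ∑ j, c j ^ 2 = 1)
    (k : ℕ) (hke : Even k) (ε M : ℝ) (hM : 1 ≤ M)
    (L : MvPolynomial (Fin n) ℝ → ℝ)
    (hL : IsPseudoExpectation n (k + 2) L)
    (hconstr : SatisfiesZero n (k + 2) L ((∑ j, X j ^ 2) - 1))
    (hLc : Real.exp (-(ε * k)) ≤ L ((∑ j, C (c j) * X j) ^ k))
    (Wbar : MvPolynomial (Fin n) ℝ)
    (hWbar : Wbar = ((∑ j, C (c j) * X j) ^ 2 + C (1 / M) * ∑ j, X j ^ 2) ^ (k / 2)) :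
    (IsSOS Wbar ∧ Wbar.totalDegree = k) ∧
    Real.exp (-(ε * k)) ≤ L Wbar ∧
    (1 - 2 / M) * L Wbar - (1 - 1 / M) ^ (k / 2) ≤
      L (Wbar * (∑ j, C (c j) * X j) ^ 2) := by
  obtain ⟨m, rfl⟩ := hke
  rw [show (m + m) / 2 = m by omega] at hWbar ⊢
  subst hWbar
  have hM₀ : 0 ≤ 1 / M := div_nonneg zero_le_one (by linarith)
  have hc₀ : c ≠ 0 := by
    rintro rfl
    simp at hc
  have hv := (isHomogeneous_sum_C_mul_X c).totalDegree_le
  refine ⟨⟨(((isSOSOfDegLe_sq hv).add (isSOSOfDegLe_sum_X_sq.C_mul hM₀)).pow m).isSOS, ?_⟩,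
    hLc.trans ?_, hL.sub_le_map_mul_sq (by omega) hv isSOSOfDegLe_sum_X_sq hconstr hM⟩
  · rw [totalDegree_sq_add_C_mul_sum_X_sq_pow hc₀ hM₀, two_mul]
  · rw [← two_mul]
    exact hL.map_pow_le_map_add_C_mul_pow (by omega) hv isSOSOfDegLe_sum_X_sq hM₀

/-- For a unit vector `c`, even `k ≥ 2`, `ε > 0`, `M ≥ 1`, and a degree-`(k+2)`
pseudoexpectation `L` satisfying `{‖u‖₂² = 1}` with `L ⟨c,u⟩^k ≥ e^{-εk}`, the polynomial
`W̄ = (⟨c,u⟩² + (1/M)‖u‖₂²)^{k/2}` is a sum of squares of degree `k`, `L W̄ ≥ e^{-εk}`,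
and `L (W̄ ⟨c,u⟩²) ≥ (1 - 2/M) L W̄ - (1 - 1/M)^{k/2}`. -/
theorem stmt12 (n : ℕ) (c : Fin n → ℝ) (hc : ∑ j, c j ^ 2 = 1)
    (k : ℕ) (hk : 2 ≤ k) (hke : Even k) (ε M : ℝ) (hε : 0 < ε) (hM : 1 ≤ M)
    (L : MvPolynomial (Fin n) ℝ → ℝ)
    (hL : IsPseudoExpectation n (k + 2) L)
    (hconstr : SatisfiesZero n (k + 2) L ((∑ j, X j ^ 2) - 1))
    (hLc : Real.exp (-(ε * k)) ≤ L ((∑ j, C (c j) * X j) ^ k))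
    (Wbar : MvPolynomial (Fin n) ℝ)
    (hWbar : Wbar = ((∑ j, C (c j) * X j) ^ 2 + C (1 / M) * ∑ j, X j ^ 2) ^ (k / 2)) :
    (IsSOS Wbar ∧ Wbar.totalDegree = k) ∧
    Real.exp (-(ε * k)) ≤ L Wbar ∧
    (1 - 2 / M) * L Wbar - (1 - 1 / M) ^ (k / 2) ≤
      L (Wbar * (∑ j, C (c j) * X j) ^ 2) :=
  stmt12_general n c hc k hke ε M hM L hL hconstr hLc Wbar hWbar
end

section
/- Let c ∈ ℝⁿ be a unit vector, let ε ∈ (0, 1/2), and let ξ be a random vector in ℝⁿ with ‖ξ‖₂⁴ integrable and 0 < E‖ξ‖₂². Suppose E(‖ξ‖₂² − ⟨c,ξ⟩²) ≤ ε·E‖ξ‖₂² and E‖ξ‖₂⁴ ≤ 3·(E‖ξ‖₂²)². Then the probability of the event {⟨c,ξ⟩² ≥ (1 − 2ε)·‖ξ‖₂²} is at least (ln 2)²/27. -/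
/-!
Off the event `A = {⟨c,ξ⟩² ≥ (1 - 2ε)‖ξ‖²}` the defect `‖ξ‖² - ⟨c,ξ⟩²` exceeds `2ε‖ξ‖²`, so the
hypothesis `E(‖ξ‖² - ⟨c,ξ⟩²) ≤ ε E‖ξ‖²` forces `A` to carry at least half of `E‖ξ‖²`.
Cauchy–Schwarz on `A` then gives `(E‖ξ‖²)² / 4 ≤ P(A) E‖ξ‖⁴ ≤ 3 P(A) (E‖ξ‖²)²`, that is
`P(A) ≥ 1/12`, which exceeds `(ln 2)² / 27`.
-/

open MeasureTheory

namespace MeasureTheory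

variable {Ω : Type*} [MeasurableSpace Ω] {μ : Measure Ω}

theorem two_mul_mul_setIntegral_le_sq_mul_measureReal_add_integral_sq [IsFiniteMeasure μ] {f : Ω → ℝ} (s : Set Ω)
    (hf : Integrable f μ) (hf2 : Integrable (fun ω => f ω ^ 2) μ) (t : ℝ) :
    2 * t * ∫ ω in s, f ω ∂μ ≤ t ^ 2 * μ.real s + ∫ ω, f ω ^ 2 ∂μ := by
  calc 2 * t * ∫ ω in s, f ω ∂μ = ∫ ω in s, 2 * t * f ω ∂μ := (integral_const_mul _ _).symm
    _ ≤ ∫ ω in s, (t ^ 2 + f ω ^ 2) ∂μ :=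
        setIntegral_mono (hf.const_mul _).integrableOn
          ((integrable_const _).add hf2).integrableOn
          fun ω => by nlinarith [sq_nonneg (t - f ω)]
    _ = t ^ 2 * μ.real s + ∫ ω in s, f ω ^ 2 ∂μ := by
        rw [integral_add (integrable_const _).integrableOn hf2.integrableOn, setIntegral_const,
          smul_eq_mul, mul_comm]
    _ ≤ t ^ 2 * μ.real s + ∫ ω, f ω ^ 2 ∂μ := by
        gcongr 1
        exact setIntegral_le_integral hf2 (Filter.Eventually.of_forall fun ω => sq_nonneg _)

theorem sq_setIntegral_le_measureReal_mul_integral_sq [IsFiniteMeasure μ] {f : Ω → ℝ}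
    (s : Set Ω) (hf : Integrable f μ) (hf2 : Integrable (fun ω => f ω ^ 2) μ) :
    (∫ ω in s, f ω ∂μ) ^ 2 ≤ μ.real s * ∫ ω, f ω ^ 2 ∂μ := by
  rcases (measureReal_nonneg : 0 ≤ μ.real s).eq_or_lt with hs | hs
  · rw [← hs, setIntegral_measure_zero _ ((measureReal_eq_zero_iff).mp hs.symm)]
    simp
  · have key := two_mul_mul_setIntegral_le_sq_mul_measureReal_add_integral_sq s hf hf2 ((∫ ω in s, f ω ∂μ) / μ.real s)
    have hquot : (∫ ω in s, f ω ∂μ) ^ 2 / μ.real s ≤ ∫ ω, f ω ^ 2 ∂μ := by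
      have e₁ : 2 * ((∫ ω in s, f ω ∂μ) / μ.real s) * ∫ ω in s, f ω ∂μ
          = 2 * ((∫ ω in s, f ω ∂μ) ^ 2 / μ.real s) := by ring
      have e₂ : ((∫ ω in s, f ω ∂μ) / μ.real s) ^ 2 * μ.real s
          = (∫ ω in s, f ω ∂μ) ^ 2 / μ.real s := by field_simp
      linarith
    rwa [div_le_iff₀ hs, mul_comm] at hquot

theorem integral_le_two_mul_setIntegral_of_integral_sub_le {f g : Ω → ℝ} {ε : ℝ} (hε : 0 < ε)
    (hf : Integrable f μ) (hg : Integrable g μ) (hgf : ∀ ω, g ω ≤ f ω)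
    (h : ∫ ω, (f ω - g ω) ∂μ ≤ ε * ∫ ω, f ω ∂μ) :
    ∫ ω, f ω ∂μ ≤ 2 * ∫ ω in {ω | (1 - 2 * ε) * f ω ≤ g ω}, f ω ∂μ := by
  set A := {ω | (1 - 2 * ε) * f ω ≤ g ω}
  have hA : NullMeasurableSet A μ :=
    nullMeasurableSet_le (hf.aemeasurable.const_mul _) hg.aemeasurable
  have hfg : Integrable (fun ω => f ω - g ω) μ := hf.sub hg
  have hA_nonneg : 0 ≤ ∫ ω in A, (f ω - g ω) ∂μ :=
    integral_nonneg fun ω => sub_nonneg.2 (hgf ω)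
  have hAc : 2 * ε * ∫ ω in Aᶜ, f ω ∂μ ≤ ∫ ω in Aᶜ, (f ω - g ω) ∂μ := by
    rw [← integral_const_mul]
    refine setIntegral_mono_ae_restrict (hf.const_mul _).integrableOn hfg.integrableOn ?_
    filter_upwards [ae_restrict_mem₀ hA.compl] with ω hω
    have : g ω < (1 - 2 * ε) * f ω := not_le.mp hω
    linarith
  have hsplit_defect := integral_add_compl₀ hA hfg
  have hsplit := integral_add_compl₀ hA hf
  nlinarith

end MeasureTheory

theorem stmt13_general {Ω : Type*} [MeasurableSpace Ω] (μ : Measure Ω) [IsProbabilityMeasure μ]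
    (n : ℕ) (c : Fin n → ℝ) (hc : ∑ j, c j ^ 2 = 1)
    (ε : ℝ) (hε0 : 0 < ε)
    (ξ : Ω → Fin n → ℝ)
    (hint4 : Integrable (fun ω => (∑ j, ξ ω j ^ 2) ^ 2) μ)
    (hint2 : Integrable (fun ω => ∑ j, ξ ω j ^ 2) μ)
    (hintc : Integrable (fun ω => (∑ j, c j * ξ ω j) ^ 2) μ)
    (hpos : 0 < ∫ ω, ∑ j, ξ ω j ^ 2 ∂μ)
    (hcorr : ∫ ω, ((∑ j, ξ ω j ^ 2) - (∑ j, c j * ξ ω j) ^ 2) ∂μ ≤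
      ε * ∫ ω, ∑ j, ξ ω j ^ 2 ∂μ)
    (hmom : ∫ ω, (∑ j, ξ ω j ^ 2) ^ 2 ∂μ ≤ 3 * (∫ ω, ∑ j, ξ ω j ^ 2 ∂μ) ^ 2) :
    Real.log 2 ^ 2 / 27 ≤
      (μ {ω | (1 - 2 * ε) * ∑ j, ξ ω j ^ 2 ≤ (∑ j, c j * ξ ω j) ^ 2}).toReal := by
  have hproj : ∀ ω, (∑ j, c j * ξ ω j) ^ 2 ≤ ∑ j, ξ ω j ^ 2 := fun ω => by
    simpa [hc] using Finset.sum_mul_sq_le_sq_mul_sq Finset.univ c (ξ ω)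
  set A := {ω | (1 - 2 * ε) * ∑ j, ξ ω j ^ 2 ≤ (∑ j, c j * ξ ω j) ^ 2}
  set m := ∫ ω, ∑ j, ξ ω j ^ 2 ∂μ
  have hhalf : m ≤ 2 * ∫ ω in A, ∑ j, ξ ω j ^ 2 ∂μ :=
    integral_le_two_mul_setIntegral_of_integral_sub_le hε0 hint2 hintc hproj hcorr
  have hCS := sq_setIntegral_le_measureReal_mul_integral_sq A hint2 hint4
  have hm2 : 1 * m ^ 2 ≤ 12 * μ.real A * m ^ 2 :=
    calc 1 * m ^ 2 ≤ (2 * ∫ ω in A, ∑ j, ξ ω j ^ 2 ∂μ) ^ 2 := by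
          rw [one_mul]; exact pow_le_pow_left₀ hpos.le hhalf 2
      _ = 4 * (∫ ω in A, ∑ j, ξ ω j ^ 2 ∂μ) ^ 2 := by ring
      _ ≤ 4 * (μ.real A * ∫ ω, (∑ j, ξ ω j ^ 2) ^ 2 ∂μ) := by gcongr
      _ ≤ 12 * μ.real A * m ^ 2 := by nlinarith [measureReal_nonneg (μ := μ) (s := A)]
  have h12 : 1 / 12 ≤ μ.real A := by
    linarith [le_of_mul_le_mul_right hm2 (pow_pos hpos 2)]
  have hlog : Real.log 2 ^ 2 / 27 ≤ 1 / 12 := by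
    nlinarith [Real.log_two_lt_d9, Real.log_nonneg one_le_two]
  rw [← measureReal_def]
  linarith

/-- If `c` is a unit vector, `ε ∈ (0,1/2)`, and `ξ` is a random vector with
`E(‖ξ‖² - ⟨c,ξ⟩²) ≤ ε E‖ξ‖²` and `E‖ξ‖⁴ ≤ 3 (E‖ξ‖²)²`, then
`Pr[⟨c,ξ⟩² ≥ (1-2ε)‖ξ‖²] ≥ (ln 2)²/27`. -/
theorem stmt13 {Ω : Type*} [MeasurableSpace Ω] (μ : Measure Ω) [IsProbabilityMeasure μ]
    (n : ℕ) (c : Fin n → ℝ) (hc : ∑ j, c j ^ 2 = 1)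
    (ε : ℝ) (hε0 : 0 < ε) (hε1 : ε < 1 / 2)
    (ξ : Ω → Fin n → ℝ) (hmeas : Measurable ξ)
    (hint4 : Integrable (fun ω => (∑ j, ξ ω j ^ 2) ^ 2) μ)
    (hint2 : Integrable (fun ω => ∑ j, ξ ω j ^ 2) μ)
    (hintc : Integrable (fun ω => (∑ j, c j * ξ ω j) ^ 2) μ)
    (hpos : 0 < ∫ ω, ∑ j, ξ ω j ^ 2 ∂μ)
    (hcorr : ∫ ω, ((∑ j, ξ ω j ^ 2) - (∑ j, c j * ξ ω j) ^ 2) ∂μ ≤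
      ε * ∫ ω, ∑ j, ξ ω j ^ 2 ∂μ)
    (hmom : ∫ ω, (∑ j, ξ ω j ^ 2) ^ 2 ∂μ ≤ 3 * (∫ ω, ∑ j, ξ ω j ^ 2 ∂μ) ^ 2) :
    Real.log 2 ^ 2 / 27 ≤
      (μ {ω | (1 - 2 * ε) * ∑ j, ξ ω j ^ 2 ≤ (∑ j, c j * ξ ω j) ^ 2}).toReal :=
  stmt13_general μ n c hc ε hε0 ξ hint4 hint2 hintc hpos hcorr hmom
end
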